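/- arXiv:1804.04359 — 2 statements merged into one kernel-verified Lean document; each statement's English description precedes it below -/
import Mathlib

section
/- The augmented target distribution π̃^N(dv_{x,1:T}^{1:N}, dv_{A,1:T-1}, j_{1:T}, dθ) of Proposition 1 can be equivalently written as [p(dθ) ψ(dv_{x,1:T}^{1:N}, dv_{A,1:T-1}) / p(y_{1:T})] × ∏_{t=1}^T (N^{-1} Σ_{i=1}^N w_t^i) × w̄_T^{j_T} ∏_{t=2}^T [w_{t-1}^{j_{t-1}} f_t^θ(x_t^{j_t} | x_{t-1}^{j_{t-1}}) / Σ_{l=1}^N w_{t-1}^l f_t^θ(x_t^{j_t} | x_{t-1}^l)]. -/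
open Finset

/-!
In `π̃ᴺ`, `ψ` is divided by the proposal density `m₁ ∏ₜ w̄ₜ(aₜ) mₜ` of the reference path,
where `aₜ` is the ancestor of the reference particle at time `t + 1`. Each factor of the path
density is then absorbed into an importance weight: `f₁ g₀ / m₁ = w₀^{j₀}`, and because
`w̄ₜ(aₜ) = wₜ(aₜ) / ∑ᵢ wₜⁱ` the ancestor weight in the numerator of the backward kernel cancels,
leaving `(∑ᵢ wₜⁱ) · gₜ₊₁ fₜ(xₜ^{aₜ}, ·) / mₜ = (∑ᵢ wₜⁱ) · wₜ₊₁^{jₜ₊₁}`. Finally the reference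
weights re-index, `w₀ ∏ₜ wₜ₊₁ = (∏ₜ wₜ) w_T`, producing the backward weights with reference
indices and `w̄_T^{j_T} ∑ᵢ w_Tⁱ`.
-/

section ParticleWeights

variable {X : Type*} {N T : ℕ} {m1 f1 : X → ℝ} {g : Fin (T + 1) → X → ℝ}
  {mS f : Fin T → X → X → ℝ} {P : Fin (T + 1) → Fin N → X} {A : Fin T → Fin N → Fin N}
  {w : Fin (T + 1) → Fin N → ℝ}

theorem importanceWeight_pos (hm1 : ∀ x, 0 < m1 x) (hf1 : ∀ x, 0 < f1 x)
    (hg : ∀ t x, 0 < g t x) (hmS : ∀ t x x', 0 < mS t x x') (hf : ∀ t x x', 0 < f t x x')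
    (hw0 : ∀ i, w 0 i = f1 (P 0 i) * g 0 (P 0 i) / m1 (P 0 i))
    (hwt : ∀ (t : Fin T) i, w t.succ i =
      f t (P t.castSucc (A t i)) (P t.succ i) * g t.succ (P t.succ i)
        / mS t (P t.castSucc (A t i)) (P t.succ i)) :
    ∀ t i, 0 < w t i := by
  refine Fin.cases (fun i => ?_) (fun t i => ?_)
  · rw [hw0]
    exact div_pos (mul_pos (hf1 _) (hg _ _)) (hm1 _)
  · rw [hwt]
    exact div_pos (mul_pos (hf _ _ _) (hg _ _)) (hmS _ _ _)

theorem prod_transition_mul_ancestorBackward_div (hmS : ∀ t x x', 0 < mS t x x')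
    (hwt : ∀ (t : Fin T) i, w t.succ i =
      f t (P t.castSucc (A t i)) (P t.succ i) * g t.succ (P t.succ i)
        / mS t (P t.castSucc (A t i)) (P t.succ i))
    (hw : ∀ t i, 0 < w t i) (j : Fin (T + 1) → Fin N) (S : Fin T → ℝ) :
    (∏ t : Fin T,
        f t (P t.castSucc (j t.castSucc)) (P t.succ (j t.succ)) * g t.succ (P t.succ (j t.succ))) *
      (∏ t : Fin T, w t.castSucc (A t (j t.succ)) *
          f t (P t.castSucc (A t (j t.succ))) (P t.succ (j t.succ)) / S t) /
      ∏ t : Fin T, w t.castSucc (A t (j t.succ)) / (∑ i, w t.castSucc i) *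
        mS t (P t.castSucc (A t (j t.succ))) (P t.succ (j t.succ)) =
    (∏ t : Fin T, ∑ i, w t.castSucc i) * (∏ t : Fin T, w t.succ (j t.succ)) *
      ∏ t : Fin T, f t (P t.castSucc (j t.castSucc)) (P t.succ (j t.succ)) / S t := by
  simp only [← prod_mul_distrib, ← prod_div_distrib]
  refine prod_congr rfl fun t _ => ?_
  have hsum : ∑ i, w t.castSucc i ≠ 0 :=
    (sum_pos (fun i _ => hw _ i) ⟨A t (j t.succ), mem_univ _⟩).ne'
  rw [hwt]
  field_simp [(hw t.castSucc (A t (j t.succ))).ne', hsum, (hmS t _ _).ne']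

theorem pathDensity_mul_ancestorBackward_div (hmS : ∀ t x x', 0 < mS t x x')
    (hw0 : ∀ i, w 0 i = f1 (P 0 i) * g 0 (P 0 i) / m1 (P 0 i))
    (hwt : ∀ (t : Fin T) i, w t.succ i =
      f t (P t.castSucc (A t i)) (P t.succ i) * g t.succ (P t.succ i)
        / mS t (P t.castSucc (A t i)) (P t.succ i))
    (hw : ∀ t i, 0 < w t i) (j : Fin (T + 1) → Fin N) (S : Fin T → ℝ) :
    f1 (P 0 (j 0)) * g 0 (P 0 (j 0)) * (∏ t : Fin T,
        f t (P t.castSucc (j t.castSucc)) (P t.succ (j t.succ)) * g t.succ (P t.succ (j t.succ))) *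
      (∏ t : Fin T, w t.castSucc (A t (j t.succ)) *
          f t (P t.castSucc (A t (j t.succ))) (P t.succ (j t.succ)) / S t) /
      (m1 (P 0 (j 0)) * ∏ t : Fin T, w t.castSucc (A t (j t.succ)) / (∑ i, w t.castSucc i) *
        mS t (P t.castSucc (A t (j t.succ))) (P t.succ (j t.succ))) =
    (∏ t : Fin T, ∑ i, w t.castSucc i) * w (Fin.last T) (j (Fin.last T)) *
      ∏ t : Fin T, w t.castSucc (j t.castSucc) *
        f t (P t.castSucc (j t.castSucc)) (P t.succ (j t.succ)) / S t := by
  have hreindex : w 0 (j 0) * ∏ t : Fin T, w t.succ (j t.succ) =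
      (∏ t : Fin T, w t.castSucc (j t.castSucc)) * w (Fin.last T) (j (Fin.last T)) := by
    rw [← Fin.prod_univ_succ (fun t => w t (j t)), ← Fin.prod_univ_castSucc (fun t => w t (j t))]
  rw [mul_assoc (f1 _ * g 0 _), mul_div_mul_comm, prod_transition_mul_ancestorBackward_div hmS hwt hw j S,
    ← hw0]
  simp only [mul_div_assoc, prod_mul_distrib]
  linear_combination (∏ t : Fin T, ∑ i, w t.castSucc i) *
    (∏ t : Fin T, f t (P t.castSucc (j t.castSucc)) (P t.succ (j t.succ)) / S t) * hreindex

end ParticleWeights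

theorem stmt_7_general {X : Type*} (N T : ℕ)
    (m1 f1 : X → ℝ) (g : Fin (T + 1) → X → ℝ)
    (mS f : Fin T → X → X → ℝ)
    (hm1 : ∀ x, 0 < m1 x) (hf1 : ∀ x, 0 < f1 x) (hg : ∀ t x, 0 < g t x)
    (hmS : ∀ t x x', 0 < mS t x x') (hf : ∀ t x x', 0 < f t x x')
    -- importance weights of the particle system
    (W : (Fin (T + 1) → Fin N → X) → (Fin T → Fin N → Fin N) →
          Fin (T + 1) → Fin N → ℝ)
    (hW0 : ∀ P A i, W P A 0 i = f1 (P 0 i) * g 0 (P 0 i) / m1 (P 0 i))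
    (hWt : ∀ P A (t : Fin T) i, W P A t.succ i =
        f t (P t.castSucc (A t i)) (P t.succ i) * g t.succ (P t.succ i)
          / mS t (P t.castSucc (A t i)) (P t.succ i))
    -- normalized weights
    (Wbar : (Fin (T + 1) → Fin N → X) → (Fin T → Fin N → Fin N) →
          Fin (T + 1) → Fin N → ℝ)
    (hWbar : ∀ P A t i, Wbar P A t i = W P A t i / ∑ l, W P A t l)
    -- joint density of all basic random variables (particles and multinomial ancestors)
    (ψ : (Fin (T + 1) → Fin N → X) → (Fin T → Fin N → Fin N) → ℝ)
    -- marginal likelihood and posterior density of a state trajectory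
    (Zbar : ℝ)
    (post : (Fin (T + 1) → X) → ℝ)
    (hpost : ∀ ξ, post ξ = (f1 (ξ 0) * g 0 (ξ 0) *
        ∏ t : Fin T, f t (ξ t.castSucc) (ξ t.succ) * g t.succ (ξ t.succ)) / Zbar)
    -- the augmented target density π̃ᴺ
    (πN : (Fin (T + 1) → Fin N → X) → (Fin T → Fin N → Fin N) →
          (Fin (T + 1) → Fin N) → ℝ)
    (hπN : ∀ P A j, πN P A j =
      post (fun t => P t (j t)) / (N : ℝ) ^ (T + 1) *
        (ψ P A / (m1 (P 0 (j 0)) *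
          ∏ t : Fin T, Wbar P A t.castSucc (A t (j t.succ)) *
            mS t (P t.castSucc (A t (j t.succ))) (P t.succ (j t.succ)))) *
        ∏ t : Fin T,
          W P A t.castSucc (A t (j t.succ)) *
              f t (P t.castSucc (A t (j t.succ))) (P t.succ (j t.succ)) /
            ∑ l, W P A t.castSucc l * f t (P t.castSucc l) (P t.succ (j t.succ))) :
    ∀ (P : Fin (T + 1) → Fin N → X) (A : Fin T → Fin N → Fin N)
      (j : Fin (T + 1) → Fin N),
      πN P A j =
        ψ P A / Zbar *
          (∏ t : Fin (T + 1), ((N : ℝ)⁻¹ * ∑ i, W P A t i)) *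
          (Wbar P A (Fin.last T) (j (Fin.last T)) *
            ∏ t : Fin T,
              W P A t.castSucc (j t.castSucc) *
                  f t (P t.castSucc (j t.castSucc)) (P t.succ (j t.succ)) /
                ∑ l, W P A t.castSucc l * f t (P t.castSucc l) (P t.succ (j t.succ))) := by
  intro P A j
  have hw := importanceWeight_pos hm1 hf1 hg hmS hf (hW0 P A) (hWt P A)
  have hratio := pathDensity_mul_ancestorBackward_div hmS (hW0 P A) (hWt P A) hw j
    fun t => ∑ l, W P A t.castSucc l * f t (P t.castSucc l) (P t.succ (j t.succ))
  have hlast : ∑ i, W P A (Fin.last T) i ≠ 0 :=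
    (sum_pos (fun i _ => hw _ i) ⟨j 0, mem_univ _⟩).ne'
  have haverage : (∏ t : Fin (T + 1), ((N : ℝ)⁻¹ * ∑ i, W P A t i)) *
      Wbar P A (Fin.last T) (j (Fin.last T)) =
      ((N : ℝ) ^ (T + 1))⁻¹ * (∏ t : Fin T, ∑ i, W P A t.castSucc i) *
        W P A (Fin.last T) (j (Fin.last T)) := by
    rw [Fin.prod_univ_castSucc, prod_mul_distrib, prod_const, card_univ, Fintype.card_fin, hWbar]
    linear_combination ((N : ℝ)⁻¹ ^ (T + 1) * (∏ t : Fin T, ∑ i, W P A t.castSucc i) *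
      W P A (Fin.last T) (j (Fin.last T))) * mul_inv_cancel₀ hlast
  rw [hπN, hpost]
  simp only [hWbar] at haverage ⊢
  linear_combination (ψ P A / Zbar / (N : ℝ) ^ (T + 1)) * hratio - (ψ P A / Zbar *
    ∏ t : Fin T, W P A t.castSucc (j t.castSucc) *
      f t (P t.castSucc (j t.castSucc)) (P t.succ (j t.succ)) /
      ∑ l, W P A t.castSucc l * f t (P t.castSucc l) (P t.succ (j t.succ))) * haverage

/-- Proposition 2: the augmented target distribution can be equivalently written
as `[p(θ)ψ/p(y_{1:T})] × ∏_t (N⁻¹ ∑ᵢ wᵢᵗ) × w̄_T^{j_T} ∏_{t≥2} backward-weights`,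
where now the backward weights use the reference indices `j_{t-1}` rather than
the ancestor indices `a_{t-1}^{j_t}`.  (Finite state space formalization, `T+1`
time points, fixed `θ`; the factor `p(θ)/p(y_{1:T})` becomes `1/Z̄`.) -/
theorem stmt_7 {X : Type*} [Fintype X] [DecidableEq X] (N T : ℕ) (hN : 0 < N)
    (m1 f1 : X → ℝ) (g : Fin (T + 1) → X → ℝ)
    (mS f : Fin T → X → X → ℝ)
    (hm1 : ∀ x, 0 < m1 x) (hf1 : ∀ x, 0 < f1 x) (hg : ∀ t x, 0 < g t x)
    (hmS : ∀ t x x', 0 < mS t x x') (hf : ∀ t x x', 0 < f t x x')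
    -- importance weights of the particle system
    (W : (Fin (T + 1) → Fin N → X) → (Fin T → Fin N → Fin N) →
          Fin (T + 1) → Fin N → ℝ)
    (hW0 : ∀ P A i, W P A 0 i = f1 (P 0 i) * g 0 (P 0 i) / m1 (P 0 i))
    (hWt : ∀ P A (t : Fin T) i, W P A t.succ i =
        f t (P t.castSucc (A t i)) (P t.succ i) * g t.succ (P t.succ i)
          / mS t (P t.castSucc (A t i)) (P t.succ i))
    -- normalized weights
    (Wbar : (Fin (T + 1) → Fin N → X) → (Fin T → Fin N → Fin N) →
          Fin (T + 1) → Fin N → ℝ)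
    (hWbar : ∀ P A t i, Wbar P A t i = W P A t i / ∑ l, W P A t l)
    -- joint density of all basic random variables (particles and multinomial ancestors)
    (ψ : (Fin (T + 1) → Fin N → X) → (Fin T → Fin N → Fin N) → ℝ)
    (hψ : ∀ P A, ψ P A = (∏ i, m1 (P 0 i)) *
        ∏ t : Fin T, ∏ i, Wbar P A t.castSucc (A t i) *
          mS t (P t.castSucc (A t i)) (P t.succ i))
    -- marginal likelihood and posterior density of a state trajectory
    (Zbar : ℝ)
    (hZbar : Zbar = ∑ ξ : Fin (T + 1) → X,
        f1 (ξ 0) * g 0 (ξ 0) *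
          ∏ t : Fin T, f t (ξ t.castSucc) (ξ t.succ) * g t.succ (ξ t.succ))
    (post : (Fin (T + 1) → X) → ℝ)
    (hpost : ∀ ξ, post ξ = (f1 (ξ 0) * g 0 (ξ 0) *
        ∏ t : Fin T, f t (ξ t.castSucc) (ξ t.succ) * g t.succ (ξ t.succ)) / Zbar)
    -- the augmented target density π̃ᴺ
    (πN : (Fin (T + 1) → Fin N → X) → (Fin T → Fin N → Fin N) →
          (Fin (T + 1) → Fin N) → ℝ)
    (hπN : ∀ P A j, πN P A j =
      post (fun t => P t (j t)) / (N : ℝ) ^ (T + 1) *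
        (ψ P A / (m1 (P 0 (j 0)) *
          ∏ t : Fin T, Wbar P A t.castSucc (A t (j t.succ)) *
            mS t (P t.castSucc (A t (j t.succ))) (P t.succ (j t.succ)))) *
        ∏ t : Fin T,
          W P A t.castSucc (A t (j t.succ)) *
              f t (P t.castSucc (A t (j t.succ))) (P t.succ (j t.succ)) /
            ∑ l, W P A t.castSucc l * f t (P t.castSucc l) (P t.succ (j t.succ))) :
    ∀ (P : Fin (T + 1) → Fin N → X) (A : Fin T → Fin N → Fin N)
      (j : Fin (T + 1) → Fin N),
      πN P A j =
        ψ P A / Zbar *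
          (∏ t : Fin (T + 1), ((N : ℝ)⁻¹ * ∑ i, W P A t i)) *
          (Wbar P A (Fin.last T) (j (Fin.last T)) *
            ∏ t : Fin T,
              W P A t.castSucc (j t.castSucc) *
                  f t (P t.castSucc (j t.castSucc)) (P t.succ (j t.succ)) /
                ∑ l, W P A t.castSucc l * f t (P t.castSucc l) (P t.succ (j t.succ))) :=
  stmt_7_general N T m1 f1 g mS f hm1 hf1 hg hmS hf W hW0 hWt Wbar hWbar ψ Zbar post hpost πN hπN
end

section
/- Under the augmented target distribution, the conditional distribution of the index sequence J_{1:T} given the basic random numbers and θ is π̃^N(j_{1:T} | v_{x,1:T}^{1:N}, v_{A,1:T-1}, θ) = w̄_T^{j_T} ∏_{t=2}^T [w_{t-1}^{j_{t-1}} f_t^θ(x_t^{j_t} | x_{t-1}^{j_{t-1}}) / Σ_{l=1}^N w_{t-1}^l f_t^θ(x_t^{j_t} | x_{t-1}^l)], and this conditional can be sampled by backward simulation: draw J_T with probability proportional to w_T^{j_T}, then for t = T−1,...,1 draw J_t = l with probability proportional to w_t^l f_t^θ(x_{t+1}^{j_{t+1}} | x_t^l). -/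
/-!
Substituting the weight recursion into the augmented target, along the ancestral path of `j`
the proposal density and the ancestor weight cancel against the incremental weight of each
particle `j_{t+1}`, and the weights `w_t^{j_t}` then telescope. What remains is a factor
independent of `j` times the backward-simulation probability of `j`. Backward-simulation
probabilities sum to one, since every backward kernel is normalised, so that factor is the
marginal `∑ j, π̃ᴺ j`.
-/

open Finset

theorem sum_mul_prod_chain_eq_one {α R : Type*} [Fintype α] [CommSemiring R] {n : ℕ}
    (w : α → R) (hw : ∑ i, w i = 1) (q : Fin n → α → α → R) (hq : ∀ t i, ∑ l, q t l i = 1) :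
    ∑ j : Fin (n + 1) → α, w (j (Fin.last n)) * ∏ t, q t (j t.castSucc) (j t.succ) = 1 := by
  induction n with
  | zero => simpa [← (Equiv.funUnique (Fin 1) α).symm.sum_comp] using hw
  | succ n ih =>
    rw [← (Fin.consEquiv fun _ => α).sum_comp, Fintype.sum_prod_type, sum_comm]
    simp only [Fin.consEquiv_apply, Fin.prod_univ_succ, Fin.castSucc_zero, Fin.cons_zero,
      ← Fin.succ_last, ← Fin.succ_castSucc, Fin.cons_succ, mul_left_comm _ (q 0 _ _),
      ← sum_mul, hq, one_mul]
    exact ih (fun t => q t.succ) fun t => hq t.succ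

theorem eq_sum_mul_of_forall_eq_mul {ι R : Type*} [Fintype ι] [CommSemiring R] {F p : ι → R}
    {c : R} (h : ∀ i, F i = c * p i) (hp : ∑ i, p i = 1) (i : ι) :
    F i = (∑ i, F i) * p i := by
  rw [sum_congr rfl fun i _ => h i, ← mul_sum, hp, mul_one, h]

noncomputable section Backward

variable {α : Type*} [Fintype α] {T : ℕ}
  (w : Fin (T + 1) → α → ℝ) (k : Fin T → α → α → ℝ)

/-- Backward simulation draws `J_t = l` given `J_{t+1} = i` with this probability, where
`k t l i` is the transition density from particle `l` at time `t` to particle `i` at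
time `t + 1`. -/
def backwardKernel (t : Fin T) (l i : α) : ℝ :=
  w t.castSucc l * k t l i / ∑ l', w t.castSucc l' * k t l' i

def backwardProb (j : Fin (T + 1) → α) : ℝ :=
  w (Fin.last T) (j (Fin.last T)) / (∑ l, w (Fin.last T) l) *
    ∏ t : Fin T, backwardKernel w k t (j t.castSucc) (j t.succ)

variable {w k}

theorem sum_backwardKernel_eq_one [Nonempty α] (hw : ∀ t i, 0 < w t i)
    (hk : ∀ t l i, 0 < k t l i) (t : Fin T) (i : α) : ∑ l, backwardKernel w k t l i = 1 := by
  simp only [backwardKernel, ← sum_div]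
  exact div_self (sum_pos (fun l _ => mul_pos (hw _ l) (hk t l i)) univ_nonempty).ne'

theorem sum_backwardProb_eq_one [Nonempty α] (hw : ∀ t i, 0 < w t i)
    (hk : ∀ t l i, 0 < k t l i) : ∑ j, backwardProb w k j = 1 := by
  refine sum_mul_prod_chain_eq_one (fun i => w (Fin.last T) i / ∑ l, w (Fin.last T) l) ?_ _
    (sum_backwardKernel_eq_one hw hk)
  rw [← sum_div]
  exact div_self (sum_pos (fun l _ => hw _ l) univ_nonempty).ne'

/-- The augmented target with the factor `ψ / (Z̄ Nᵀ⁺¹)` removed, for initial density `ν`,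
initial proposal `μ`, observation densities `γ`, transition densities `k`, proposals `q` (all
evaluated at the particles) and ancestor indices `a`. -/
theorem augmentedTarget_eq_mul_backwardProb (μ ν : α → ℝ) (γ : Fin (T + 1) → α → ℝ)
    (q : Fin T → α → α → ℝ) (a : Fin T → α → α)
    (hw0 : ∀ i, w 0 i = ν i * γ 0 i / μ i)
    (hwt : ∀ t i, w t.succ i = k t (a t i) i * γ t.succ i / q t (a t i) i)
    (hw : ∀ t i, 0 < w t i) (j : Fin (T + 1) → α) :
    (ν (j 0) * γ 0 (j 0) * ∏ t : Fin T, k t (j t.castSucc) (j t.succ) * γ t.succ (j t.succ)) /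
        (μ (j 0) * ∏ t : Fin T, w t.castSucc (a t (j t.succ)) / (∑ l, w t.castSucc l) *
          q t (a t (j t.succ)) (j t.succ)) *
        ∏ t : Fin T, backwardKernel w k t (a t (j t.succ)) (j t.succ) =
      (∏ t : Fin T, ∑ l, w t.castSucc l) * (∑ l, w (Fin.last T) l) * backwardProb w k j := by
  have hstep : ∀ t, k t (j t.castSucc) (j t.succ) * γ t.succ (j t.succ) /
      (w t.castSucc (a t (j t.succ)) / (∑ l, w t.castSucc l) * q t (a t (j t.succ)) (j t.succ)) *
        backwardKernel w k t (a t (j t.succ)) (j t.succ) =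
      w t.succ (j t.succ) * (∑ l, w t.castSucc l) *
        (k t (j t.castSucc) (j t.succ) / ∑ l, w t.castSucc l * k t l (j t.succ)) := by
    intro t
    rw [backwardKernel, hwt]
    have := (hw t.castSucc (a t (j t.succ))).ne'
    field_simp
  have htelescope : w 0 (j 0) * ∏ t : Fin T, w t.succ (j t.succ) =
      w (Fin.last T) (j (Fin.last T)) * ∏ t : Fin T, w t.castSucc (j t.castSucc) := by
    rw [← Fin.prod_univ_succ (fun t => w t (j t)), Fin.prod_univ_castSucc, mul_comm]
  have hlast : (∑ l, w (Fin.last T) l) ≠ 0 :=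
    (sum_pos (fun l _ => hw _ l) ⟨j 0, mem_univ _⟩).ne'
  calc _ = ν (j 0) * γ 0 (j 0) / μ (j 0) *
        ∏ t : Fin T, k t (j t.castSucc) (j t.succ) * γ t.succ (j t.succ) /
          (w t.castSucc (a t (j t.succ)) / (∑ l, w t.castSucc l) *
            q t (a t (j t.succ)) (j t.succ)) *
          backwardKernel w k t (a t (j t.succ)) (j t.succ) := by
        simp only [prod_mul_distrib, prod_div_distrib]
        ring
    _ = w 0 (j 0) * ∏ t : Fin T, w t.succ (j t.succ) * (∑ l, w t.castSucc l) *
        (k t (j t.castSucc) (j t.succ) / ∑ l, w t.castSucc l * k t l (j t.succ)) := by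
        rw [← hw0, prod_congr rfl fun t _ => hstep t]
    _ = _ := by
        simp only [backwardProb, backwardKernel, prod_mul_distrib, prod_div_distrib]
        field_simp
        linear_combination (∏ t : Fin T, ∑ l, w t.castSucc l) *
          (∏ t : Fin T, k t (j t.castSucc) (j t.succ)) /
          (∏ t : Fin T, ∑ l, w t.castSucc l * k t l (j t.succ)) * htelescope

end Backward

theorem stmt_9_general {X : Type*} (N T : ℕ) (hN : 0 < N)
    (m1 f1 : X → ℝ) (g : Fin (T + 1) → X → ℝ)
    (mS f : Fin T → X → X → ℝ)
    (hm1 : ∀ x, 0 < m1 x) (hf1 : ∀ x, 0 < f1 x) (hg : ∀ t x, 0 < g t x)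
    (hmS : ∀ t x x', 0 < mS t x x') (hf : ∀ t x x', 0 < f t x x')
    -- importance weights of the particle system
    (W : (Fin (T + 1) → Fin N → X) → (Fin T → Fin N → Fin N) →
          Fin (T + 1) → Fin N → ℝ)
    (hW0 : ∀ P A i, W P A 0 i = f1 (P 0 i) * g 0 (P 0 i) / m1 (P 0 i))
    (hWt : ∀ P A (t : Fin T) i, W P A t.succ i =
        f t (P t.castSucc (A t i)) (P t.succ i) * g t.succ (P t.succ i)
          / mS t (P t.castSucc (A t i)) (P t.succ i))
    -- normalized weights
    (Wbar : (Fin (T + 1) → Fin N → X) → (Fin T → Fin N → Fin N) →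
          Fin (T + 1) → Fin N → ℝ)
    (hWbar : ∀ P A t i, Wbar P A t i = W P A t i / ∑ l, W P A t l)
    -- joint density of all basic random variables (particles and multinomial ancestors)
    (ψ : (Fin (T + 1) → Fin N → X) → (Fin T → Fin N → Fin N) → ℝ)
    -- marginal likelihood and posterior density of a state trajectory
    (Zbar : ℝ)
    (post : (Fin (T + 1) → X) → ℝ)
    (hpost : ∀ ξ, post ξ = (f1 (ξ 0) * g 0 (ξ 0) *
        ∏ t : Fin T, f t (ξ t.castSucc) (ξ t.succ) * g t.succ (ξ t.succ)) / Zbar)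
    -- the augmented target density π̃ᴺ
    (πN : (Fin (T + 1) → Fin N → X) → (Fin T → Fin N → Fin N) →
          (Fin (T + 1) → Fin N) → ℝ)
    (hπN : ∀ P A j, πN P A j =
      post (fun t => P t (j t)) / (N : ℝ) ^ (T + 1) *
        (ψ P A / (m1 (P 0 (j 0)) *
          ∏ t : Fin T, Wbar P A t.castSucc (A t (j t.succ)) *
            mS t (P t.castSucc (A t (j t.succ))) (P t.succ (j t.succ)))) *
        ∏ t : Fin T,
          W P A t.castSucc (A t (j t.succ)) *
              f t (P t.castSucc (A t (j t.succ))) (P t.succ (j t.succ)) /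
            ∑ l, W P A t.castSucc l * f t (P t.castSucc l) (P t.succ (j t.succ))) :
    ∀ (P : Fin (T + 1) → Fin N → X) (A : Fin T → Fin N → Fin N)
      (j : Fin (T + 1) → Fin N),
      πN P A j =
        (∑ j' : Fin (T + 1) → Fin N, πN P A j') *
          (Wbar P A (Fin.last T) (j (Fin.last T)) *
            ∏ t : Fin T,
              W P A t.castSucc (j t.castSucc) *
                  f t (P t.castSucc (j t.castSucc)) (P t.succ (j t.succ)) /
                ∑ l, W P A t.castSucc l * f t (P t.castSucc l) (P t.succ (j t.succ))) := by
  intro P A j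
  have : Nonempty (Fin N) := ⟨⟨0, hN⟩⟩
  have hW : ∀ t i, 0 < W P A t i := by
    intro t i
    induction t using Fin.cases with
    | zero => rw [hW0]; exact div_pos (mul_pos (hf1 _) (hg _ _)) (hm1 _)
    | succ t => rw [hWt]; exact div_pos (mul_pos (hf _ _ _) (hg _ _)) (hmS _ _ _)
  have hfactor : ∀ j, πN P A j = ψ P A / (Zbar * (N : ℝ) ^ (T + 1)) *
      ((∏ t : Fin T, ∑ l, W P A t.castSucc l) * (∑ l, W P A (Fin.last T) l) *
        backwardProb (W P A) (fun t l i => f t (P t.castSucc l) (P t.succ i)) j) := by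
    intro j
    rw [← augmentedTarget_eq_mul_backwardProb (fun i => m1 (P 0 i)) (fun i => f1 (P 0 i))
      (fun t i => g t (P t i)) (fun t l i => mS t (P t.castSucc l) (P t.succ i)) A
      (hW0 P A) (hWt P A) hW j, hπN, hpost]
    simp only [hWbar, backwardKernel]
    ring
  rw [eq_sum_mul_of_forall_eq_mul (fun j => (hfactor j).trans (mul_assoc _ _ _).symm)
    (sum_backwardProb_eq_one hW fun _ _ _ => hf _ _ _) j, backwardProb, hWbar]
  rfl

/-- Corollary 2: under the augmented target, the conditional distribution of the
index sequence `J_{1:T}` given the basic random numbers (and `θ`) is the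
backward-simulation distribution
`w̄_T^{j_T} ∏_{t≥2} w_{t-1}^{j_{t-1}} f_t(x_t^{j_t}|x_{t-1}^{j_{t-1}}) / ∑_l w_{t-1}^l f_t(x_t^{j_t}|x_{t-1}^l)`,
i.e. the joint target factors as (marginal over `j`) × (this product), which is
exactly the probability that sequential backward simulation draws `j_{1:T}`.
(Finite state space formalization, `T+1` time points, fixed `θ`.) -/
theorem stmt_9 {X : Type*} [Fintype X] [DecidableEq X] (N T : ℕ) (hN : 0 < N)
    (m1 f1 : X → ℝ) (g : Fin (T + 1) → X → ℝ)
    (mS f : Fin T → X → X → ℝ)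
    (hm1 : ∀ x, 0 < m1 x) (hf1 : ∀ x, 0 < f1 x) (hg : ∀ t x, 0 < g t x)
    (hmS : ∀ t x x', 0 < mS t x x') (hf : ∀ t x x', 0 < f t x x')
    -- importance weights of the particle system
    (W : (Fin (T + 1) → Fin N → X) → (Fin T → Fin N → Fin N) →
          Fin (T + 1) → Fin N → ℝ)
    (hW0 : ∀ P A i, W P A 0 i = f1 (P 0 i) * g 0 (P 0 i) / m1 (P 0 i))
    (hWt : ∀ P A (t : Fin T) i, W P A t.succ i =
        f t (P t.castSucc (A t i)) (P t.succ i) * g t.succ (P t.succ i)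
          / mS t (P t.castSucc (A t i)) (P t.succ i))
    -- normalized weights
    (Wbar : (Fin (T + 1) → Fin N → X) → (Fin T → Fin N → Fin N) →
          Fin (T + 1) → Fin N → ℝ)
    (hWbar : ∀ P A t i, Wbar P A t i = W P A t i / ∑ l, W P A t l)
    -- joint density of all basic random variables (particles and multinomial ancestors)
    (ψ : (Fin (T + 1) → Fin N → X) → (Fin T → Fin N → Fin N) → ℝ)
    (hψ : ∀ P A, ψ P A = (∏ i, m1 (P 0 i)) *
        ∏ t : Fin T, ∏ i, Wbar P A t.castSucc (A t i) *
          mS t (P t.castSucc (A t i)) (P t.succ i))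
    -- marginal likelihood and posterior density of a state trajectory
    (Zbar : ℝ)
    (hZbar : Zbar = ∑ ξ : Fin (T + 1) → X,
        f1 (ξ 0) * g 0 (ξ 0) *
          ∏ t : Fin T, f t (ξ t.castSucc) (ξ t.succ) * g t.succ (ξ t.succ))
    (post : (Fin (T + 1) → X) → ℝ)
    (hpost : ∀ ξ, post ξ = (f1 (ξ 0) * g 0 (ξ 0) *
        ∏ t : Fin T, f t (ξ t.castSucc) (ξ t.succ) * g t.succ (ξ t.succ)) / Zbar)
    -- the augmented target density π̃ᴺ
    (πN : (Fin (T + 1) → Fin N → X) → (Fin T → Fin N → Fin N) →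
          (Fin (T + 1) → Fin N) → ℝ)
    (hπN : ∀ P A j, πN P A j =
      post (fun t => P t (j t)) / (N : ℝ) ^ (T + 1) *
        (ψ P A / (m1 (P 0 (j 0)) *
          ∏ t : Fin T, Wbar P A t.castSucc (A t (j t.succ)) *
            mS t (P t.castSucc (A t (j t.succ))) (P t.succ (j t.succ)))) *
        ∏ t : Fin T,
          W P A t.castSucc (A t (j t.succ)) *
              f t (P t.castSucc (A t (j t.succ))) (P t.succ (j t.succ)) /
            ∑ l, W P A t.castSucc l * f t (P t.castSucc l) (P t.succ (j t.succ))) :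
    ∀ (P : Fin (T + 1) → Fin N → X) (A : Fin T → Fin N → Fin N)
      (j : Fin (T + 1) → Fin N),
      πN P A j =
        (∑ j' : Fin (T + 1) → Fin N, πN P A j') *
          (Wbar P A (Fin.last T) (j (Fin.last T)) *
            ∏ t : Fin T,
              W P A t.castSucc (j t.castSucc) *
                  f t (P t.castSucc (j t.castSucc)) (P t.succ (j t.succ)) /
                ∑ l, W P A t.castSucc l * f t (P t.castSucc l) (P t.succ (j t.succ))) :=
  stmt_9_general N T hN m1 f1 g mS f hm1 hf1 hg hmS hf W hW0 hWt Wbar hWbar ψ Zbar post hpost πN hπN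
end
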